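/- Suppose ‖Q_0‖ ≤ C_max/(1 − β). Then after one two-step Q-learning update, for every (i,a) ∈ S × A, |Q_1(i,a)| ≤ (C_max/(1 − β))(1 + β|θ_0|); consequently ‖Q_1‖ ≤ (C_max/(1 − β))(1 + β|θ_0|). -/

import Mathlib

/-! Every term entering the TSQL target is bounded by `M = C_max/(1 − β)`: a one-step Bellman
backup `c + β max_b Q(j,b)` stays in `[-M, M]` because `C_max = (1 − β) M`. The target is one such
backup plus `βθ` times another, so it is bounded by `M(1 + β|θ|)`, and the new entry is a convex
combination of the old one and the target. -/

open Finset Real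

variable {S A : Type*}

/-- Maximum norm `‖Q‖ = max_{(i,a)} |Q(i,a)|`. -/
noncomputable def maxNorm [Fintype S] [Fintype A] [Nonempty S] [Nonempty A]
    (Q : S × A → ℝ) : ℝ :=
  Finset.univ.sup' Finset.univ_nonempty fun x => |Q x|

/-- One two-step Q-learning (TSQL) update: the selected pair `sa` is updated using
rewards `c'`, `c''`, next states `j`, `k`, step size `α` and parameter `θ`;
all other entries stay unchanged. -/
noncomputable def tsqlUpdate [Fintype A] [Nonempty A] [DecidableEq S] [DecidableEq A]
    (β : ℝ) (Q : S × A → ℝ) (sa : S × A) (j k : S) (c' c'' α θ : ℝ) : S × A → ℝ :=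
  fun x => if x = sa then
      (1 - α) * Q sa + α * (c' + β * (Finset.univ.sup' Finset.univ_nonempty fun b => Q (j, b))
        + β * θ * (c'' + β * (Finset.univ.sup' Finset.univ_nonempty fun e => Q (k, e))))
    else Q x

theorem Finset.abs_sup'_le {ι α : Type*} [AddCommGroup α] [LinearOrder α] [IsOrderedAddMonoid α]
    {s : Finset ι} (hs : s.Nonempty) {f : ι → α} {M : α} (h : ∀ i ∈ s, |f i| ≤ M) :
    |s.sup' hs f| ≤ M := by
  obtain ⟨i, hi⟩ := hs
  exact abs_le.2 ⟨(neg_le_of_abs_le (h i hi)).trans (le_sup' f hi),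
    sup'_le _ _ fun i hi => le_of_abs_le (h i hi)⟩

theorem abs_add_mul_le_of_abs_le {c v β M : ℝ} (hβ : 0 ≤ β) (hc : |c| ≤ (1 - β) * M)
    (hv : |v| ≤ M) : |c + β * v| ≤ M :=
  calc |c + β * v| ≤ |c| + β * |v| := by
        simpa only [abs_mul, abs_of_nonneg hβ] using abs_add_le c (β * v)
    _ ≤ (1 - β) * M + β * M := by gcongr
    _ = M := by ring

theorem abs_convex_comb_le {x y α R : ℝ} (hα0 : 0 ≤ α) (hα1 : α ≤ 1) (hx : |x| ≤ R)
    (hy : |y| ≤ R) : |(1 - α) * x + α * y| ≤ R :=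
  calc |(1 - α) * x + α * y| ≤ (1 - α) * |x| + α * |y| := by
        simpa only [abs_mul, abs_of_nonneg hα0, abs_of_nonneg (sub_nonneg.2 hα1)]
          using abs_add_le ((1 - α) * x) (α * y)
    _ ≤ (1 - α) * R + α * R := by gcongr
    _ = R := by ring

theorem abs_le_maxNorm [Fintype S] [Fintype A] [Nonempty S] [Nonempty A] (Q : S × A → ℝ)
    (x : S × A) : |Q x| ≤ maxNorm Q :=
  le_sup' (fun x => |Q x|) (mem_univ x)

theorem maxNorm_le [Fintype S] [Fintype A] [Nonempty S] [Nonempty A] {Q : S × A → ℝ} {M : ℝ}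
    (h : ∀ x, |Q x| ≤ M) : maxNorm Q ≤ M :=
  sup'_le _ _ fun x _ => h x

theorem abs_tsqlUpdate_le [Fintype A] [Nonempty A] [DecidableEq S] [DecidableEq A]
    {β M c' c'' α θ : ℝ} {Q : S × A → ℝ} (sa : S × A) (j k : S) (hβ : 0 ≤ β)
    (hα0 : 0 ≤ α) (hα1 : α ≤ 1) (hQ : ∀ x, |Q x| ≤ M)
    (hc' : |c'| ≤ (1 - β) * M) (hc'' : |c''| ≤ (1 - β) * M) (x : S × A) :
    |tsqlUpdate β Q sa j k c' c'' α θ x| ≤ M * (1 + β * |θ|) := by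
  have hM : 0 ≤ M := (abs_nonneg _).trans (hQ x)
  have hM_le : M ≤ M * (1 + β * |θ|) :=
    le_mul_of_one_le_right hM (le_add_of_nonneg_right (by positivity))
  have hbackup : ∀ (c : ℝ) (s : S), |c| ≤ (1 - β) * M →
      |c + β * univ.sup' univ_nonempty fun b => Q (s, b)| ≤ M := fun c s hc =>
    abs_add_mul_le_of_abs_le hβ hc (abs_sup'_le _ fun b _ => hQ (s, b))
  unfold tsqlUpdate
  split_ifs
  · refine abs_convex_comb_le hα0 hα1 ((hQ sa).trans hM_le) ?_
    calc _ ≤ M + β * |θ| * M := by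
          refine (abs_add_le _ _).trans (add_le_add (hbackup c' j hc') ?_)
          rw [abs_mul, abs_mul, abs_of_nonneg hβ]
          exact mul_le_mul_of_nonneg_left (hbackup c'' k hc'') (by positivity)
      _ = M * (1 + β * |θ|) := by ring
  · exact (hQ x).trans hM_le

theorem tsql_one_step_bound_general [Fintype S] [Fintype A] [Nonempty S] [Nonempty A]
    [DecidableEq S] [DecidableEq A]
    (β Cmax : ℝ) (hβ0 : 0 ≤ β) (hβ1 : β < 1)
    (Q0 : S × A → ℝ) (sa : S × A) (j k : S) (c' c'' α0 θ0 : ℝ)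
    (hc' : |c'| ≤ Cmax) (hc'' : |c''| ≤ Cmax)
    (hα0 : 0 ≤ α0) (hα1 : α0 ≤ 1)
    (hQ0 : maxNorm Q0 ≤ Cmax / (1 - β)) :
    (∀ x : S × A, |tsqlUpdate β Q0 sa j k c' c'' α0 θ0 x| ≤
        (Cmax / (1 - β)) * (1 + β * |θ0|)) ∧
    maxNorm (tsqlUpdate β Q0 sa j k c' c'' α0 θ0) ≤
      (Cmax / (1 - β)) * (1 + β * |θ0|) := by
  have hCmax : Cmax = (1 - β) * (Cmax / (1 - β)) := (mul_div_cancel₀ _ (sub_pos.2 hβ1).ne').symm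
  have hQ : ∀ x, |Q0 x| ≤ Cmax / (1 - β) := fun x => (abs_le_maxNorm Q0 x).trans hQ0
  have hbound := abs_tsqlUpdate_le (θ := θ0) sa j k hβ0 hα0 hα1 hQ (hCmax ▸ hc') (hCmax ▸ hc'')
  exact ⟨hbound, maxNorm_le hbound⟩

/-- If `‖Q₀‖ ≤ C_max/(1−β)` then after one TSQL update,
`|Q₁(i,a)| ≤ (C_max/(1−β))(1 + β|θ₀|)` for every `(i,a)`, and hence
`‖Q₁‖ ≤ (C_max/(1−β))(1 + β|θ₀|)`. -/
theorem tsql_one_step_bound [Fintype S] [Fintype A] [Nonempty S] [Nonempty A]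
    [DecidableEq S] [DecidableEq A]
    (β Cmax : ℝ) (hβ0 : 0 ≤ β) (hβ1 : β < 1) (hC : 0 ≤ Cmax)
    (Q0 : S × A → ℝ) (sa : S × A) (j k : S) (c' c'' α0 θ0 : ℝ)
    (hc' : |c'| ≤ Cmax) (hc'' : |c''| ≤ Cmax)
    (hα0 : 0 ≤ α0) (hα1 : α0 ≤ 1) (hθ : |θ0| ≤ 1)
    (hQ0 : maxNorm Q0 ≤ Cmax / (1 - β)) :
    (∀ x : S × A, |tsqlUpdate β Q0 sa j k c' c'' α0 θ0 x| ≤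
        (Cmax / (1 - β)) * (1 + β * |θ0|)) ∧
    maxNorm (tsqlUpdate β Q0 sa j k c' c'' α0 θ0) ≤
      (Cmax / (1 - β)) * (1 + β * |θ0|) :=
  tsql_one_step_bound_general β Cmax hβ0 hβ1 Q0 sa j k c' c'' α0 θ0 hc' hc'' hα0 hα1 hQ0
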